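/- Let X and Y be topological spaces, D_X ⊆ X and D_Y ⊆ Y closed discrete subsets, and φ : Y → X an injection such that φ[Y \ D_Y] = D_X and φ[Y] is dense in X. If every open subset of X is F_σ in X and every open subset of Y is F_σ in Y, then every open subset of the space ⟨X, σ(τ_X, τ_Y, φ)⟩ is F_σ in ⟨X, σ(τ_X, τ_Y, φ)⟩. -/

import Mathlib

/-!
A σ-open set `U` splits as `(U \ DX) ∪ φ[φ⁻¹U \ DY]`, where `φ⁻¹U \ DY` is open in `Y`.
Write `U \ DX = ⋃ Fₙ` with `Fₙ` closed in `X` and `φ⁻¹U \ DY = ⋃ Gₙ` with `Gₙ` closed in `Y`.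
Every subset of a closed discrete set is closed, and `φ⁻¹Fₙ ⊆ DY`, `φ[Gₙ] ⊆ DX`; with
injectivity (`φ⁻¹φ[Gₙ] = Gₙ`) this makes all `Fₙ` and `φ[Gₙ]` closed in the σ-topology.
-/

open Set Topology

/-- The topology σ(τ_X, τ_Y, φ): open sets of X whose φ-preimage is open in Y. -/
def sigmaTop {X : Type*} {Y : Type*} (tX : TopologicalSpace X) (tY : TopologicalSpace Y)
    (φ : Y → X) : TopologicalSpace X where
  IsOpen U := tX.IsOpen U ∧ tY.IsOpen (φ ⁻¹' U)
  isOpen_univ := ⟨tX.isOpen_univ, by simpa using tY.isOpen_univ⟩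
  isOpen_inter U V hU hV :=
    ⟨tX.isOpen_inter U V hU.1 hV.1, by
      rw [Set.preimage_inter]
      exact tY.isOpen_inter _ _ hU.2 hV.2⟩
  isOpen_sUnion s hs :=
    ⟨tX.isOpen_sUnion s fun U hU => (hs U hU).1, by
      rw [Set.preimage_sUnion]
      exact @isOpen_biUnion _ _ tY _ _ fun U hU => (hs U hU).2⟩

/-- A set is closed discrete: closed, and its subspace topology is discrete. -/
def ClosedDiscrete {X : Type*} (t : TopologicalSpace X) (D : Set X) : Prop :=
  @IsClosed X t D ∧ @DiscreteTopology D (TopologicalSpace.induced (Subtype.val : D → X) t)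

/-- A set is F_σ: a countable union of closed sets. -/
def IsFsigma {X : Type*} (t : TopologicalSpace X) (s : Set X) : Prop :=
  ∃ F : ℕ → Set X, (∀ n, @IsClosed X t (F n)) ∧ s = ⋃ n, F n

namespace ClosedDiscrete

variable {Z : Type*} {t : TopologicalSpace Z} {D : Set Z}

theorem isClosed_of_subset (hD : ClosedDiscrete t D) {S : Set Z} (hS : S ⊆ D) :
    IsClosed[t] S := by
  let := t
  have := hD.2
  rw [← inter_eq_right.2 hS, ← Subtype.image_preimage_coe]
  exact hD.1.isClosedMap_subtype_val _ (isClosed_discrete _)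

end ClosedDiscrete

theorem IsFsigma.union {Z : Type*} {t : TopologicalSpace Z} {s u : Set Z}
    (hs : IsFsigma t s) (hu : IsFsigma t u) : IsFsigma t (s ∪ u) := by
  let := t
  obtain ⟨F, hF, rfl⟩ := hs
  obtain ⟨G, hG, rfl⟩ := hu
  exact ⟨fun n => F n ∪ G n, fun n => (hF n).union (hG n), (iUnion_union_distrib F G).symm⟩

section SigmaTop

variable {X Y : Type*} {tX : TopologicalSpace X} {tY : TopologicalSpace Y} {φ : Y → X}

theorem isClosed_sigmaTop_iff {C : Set X} :
    IsClosed[sigmaTop tX tY φ] C ↔ IsClosed[tX] C ∧ IsClosed[tY] (φ ⁻¹' C) :=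
  ⟨fun h => have h' := @IsClosed.isOpen_compl _ (sigmaTop tX tY φ) _ h; ⟨⟨h'.1⟩, ⟨h'.2⟩⟩,
    fun ⟨h₁, h₂⟩ => @IsClosed.mk _ (sigmaTop tX tY φ) _ ⟨h₁.1, h₂.1⟩⟩

theorem IsFsigma.sigmaTop_of_preimage_subset {DY : Set Y} (hDY : ClosedDiscrete tY DY)
    {s : Set X} (hs : IsFsigma tX s) (hsub : φ ⁻¹' s ⊆ DY) :
    IsFsigma (sigmaTop tX tY φ) s := by
  obtain ⟨F, hF, rfl⟩ := hs
  refine ⟨F, fun n => isClosed_sigmaTop_iff.2 ⟨hF n, hDY.isClosed_of_subset ?_⟩, rfl⟩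
  exact (preimage_mono (subset_iUnion F n)).trans hsub

theorem IsFsigma.sigmaTop_image {DX : Set X} (hDX : ClosedDiscrete tX DX)
    (hinj : Function.Injective φ) {v : Set Y} (hv : IsFsigma tY v) (hsub : φ '' v ⊆ DX) :
    IsFsigma (sigmaTop tX tY φ) (φ '' v) := by
  obtain ⟨G, hG, rfl⟩ := hv
  refine ⟨fun n => φ '' G n,
    fun n => isClosed_sigmaTop_iff.2 ⟨hDX.isClosed_of_subset ?_, ?_⟩, image_iUnion⟩
  · exact (image_mono (subset_iUnion G n)).trans hsub
  · rw [hinj.preimage_image]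
    exact hG n

end SigmaTop

theorem statement6_general {X Y : Type*} (tX : TopologicalSpace X) (tY : TopologicalSpace Y)
    (DX : Set X) (DY : Set Y) (φ : Y → X)
    (hDX : ClosedDiscrete tX DX) (hDY : ClosedDiscrete tY DY)
    (hinj : Function.Injective φ)
    (himg : φ '' DYᶜ = DX)
    (hX : ∀ U : Set X, tX.IsOpen U → IsFsigma tX U)
    (hY : ∀ V : Set Y, tY.IsOpen V → IsFsigma tY V) :
    ∀ U : Set X, (sigmaTop tX tY φ).IsOpen U → IsFsigma (sigmaTop tX tY φ) U := by
  intro U hU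
  have hpre : φ ⁻¹' DXᶜ ⊆ DY := fun y hy =>
    by_contra fun hyD => hy (himg ▸ mem_image_of_mem φ hyD)
  have hsplit : U = (U ∩ DXᶜ) ∪ φ '' (φ ⁻¹' U ∩ DYᶜ) := by
    rw [image_preimage_inter, himg, union_comm, inter_union_compl]
  rw [hsplit]
  refine IsFsigma.union ?_ ?_
  · exact (hX _ (tX.isOpen_inter _ _ hU.1 hDX.1.isOpen_compl)).sigmaTop_of_preimage_subset hDY
      ((preimage_mono inter_subset_right).trans hpre)
  · exact (hY _ (tY.isOpen_inter _ _ hU.2 hDY.1.isOpen_compl)).sigmaTop_image hDX hinj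
      (himg ▸ image_mono inter_subset_right)

theorem statement6 {X Y : Type*} (tX : TopologicalSpace X) (tY : TopologicalSpace Y)
    (DX : Set X) (DY : Set Y) (φ : Y → X)
    (hDX : ClosedDiscrete tX DX) (hDY : ClosedDiscrete tY DY)
    (hinj : Function.Injective φ)
    (himg : φ '' DYᶜ = DX)
    (hdense : @Dense X tX (Set.range φ))
    (hX : ∀ U : Set X, tX.IsOpen U → IsFsigma tX U)
    (hY : ∀ V : Set Y, tY.IsOpen V → IsFsigma tY V) :
    ∀ U : Set X, (sigmaTop tX tY φ).IsOpen U → IsFsigma (sigmaTop tX tY φ) U :=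
  statement6_general tX tY DX DY φ hDX hDY hinj himg hX hY
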